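/- Let (θ_k, r_k) be the global AEGD iterates with effective step sizes η_k := η r_{k+1}/g(θ_k). Suppose f is twice differentiable, α-strongly convex and L-smooth with global minimizer θ*. If η_j ≤ 2/(α+L) for all j with k₀ ≤ j < k (for some k₀ ≥ 0), then ‖θ_k − θ*‖ ≤ exp(−c₂ (k − k₀) r_k) ‖θ_{k₀} − θ*‖, where c₂ := αη/√(f(θ_{k₀})+c). -/

import Mathlib

/-! Strong convexity and `L`-smoothness bound `f` between its linear model plus `α/2‖·‖²` and plus
`L/2‖·‖²`. Applying co-coercivity to `f - α/2‖·‖²` turns these bounds into the interpolation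
inequality `αL‖u - v‖² + ‖∇f u - ∇f v‖² ≤ (α + L)⟪∇f u - ∇f v, u - v⟫`, under which a gradient step
of size `t ≤ 2/(α + L)` shrinks the distance to the minimiser by `1 - tα ≤ exp (-tα)`. An AEGD step
is a gradient step of size `η_j = η r_{j+1} / g(θ_j)`; as `r` is nonincreasing and `f`, hence `g`,
decreases along the iterates, `η_j ≥ η r_k / g(θ_{k₀})` for `k₀ ≤ j < k`, and the factors multiply
to the claimed exponential. -/

open scoped Gradient RealInnerProductSpace

variable {E : Type*} [NormedAddCommGroup E] [InnerProductSpace ℝ E]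

theorem le_mul_of_forall_quadratic_le {A B M : ℝ} (hM : 0 ≤ M)
    (h : ∀ t, (2 * t - M * t ^ 2) * A ≤ B) : A ≤ M * B := by
  rcases hM.eq_or_lt with rfl | hM
  · by_contra hAB
    have hA : 0 < A := by linarith
    have := h ((|B| + 1) / A)
    rw [zero_mul, sub_zero, mul_assoc, div_mul_cancel₀ _ hA.ne'] at this
    linarith [le_abs_self B, abs_nonneg B]
  · have := h M⁻¹
    rw [show 2 * M⁻¹ - M * M⁻¹ ^ 2 = M⁻¹ by field_simp; ring] at this
    rwa [inv_mul_le_iff₀ hM] at this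

section QuadraticBounds

variable {f : E → ℝ} {p : E → E} {α L : ℝ}

theorem mul_norm_sub_sq_le_inner_sub
    (hlow : ∀ u v, f v + ⟪p v, u - v⟫ + α / 2 * ‖u - v‖ ^ 2 ≤ f u) (u v : E) :
    α * ‖u - v‖ ^ 2 ≤ ⟪p u - p v, u - v⟫ := by
  have h₁ := hlow u v
  have h₂ := hlow v u
  rw [← neg_sub u v, inner_neg_right, norm_neg] at h₂
  rw [inner_sub_left]
  linarith

theorem le_of_quadratic_bounds [Nontrivial E]
    (hlow : ∀ u v, f v + ⟪p v, u - v⟫ + α / 2 * ‖u - v‖ ^ 2 ≤ f u)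
    (hup : ∀ u v, f u ≤ f v + ⟪p v, u - v⟫ + L / 2 * ‖u - v‖ ^ 2) : α ≤ L := by
  obtain ⟨e, he⟩ := exists_ne (0 : E)
  have h₁ := hlow e 0
  have h₂ := hup e 0
  have he' : 0 < ‖e - 0‖ ^ 2 := by rw [sub_zero]; positivity
  nlinarith

/-- Co-coercivity: compare `f` at `u` and at `u - t • (p u - p v)` through `v`, then optimise
over `t`. -/
theorem sq_norm_sub_le_mul_inner_sub {M : ℝ} (hM : 0 ≤ M)
    (hlow : ∀ u v, f v + ⟪p v, u - v⟫ ≤ f u)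
    (hup : ∀ u v, f u ≤ f v + ⟪p v, u - v⟫ + M / 2 * ‖u - v‖ ^ 2) (u v : E) :
    ‖p u - p v‖ ^ 2 ≤ M * ⟪p u - p v, u - v⟫ := by
  have key : ∀ a b : E, ∀ t : ℝ,
      f b + ⟪p b, a - b⟫ + (t - M * t ^ 2 / 2) * ‖p a - p b‖ ^ 2 ≤ f a := by
    intro a b t
    set w := p a - p b
    have h₁ := hlow (a - t • w) b
    have h₂ := hup (a - t • w) a
    rw [show a - t • w - b = (a - b) - t • w by abel, inner_sub_right,
      real_inner_smul_right] at h₁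
    rw [show a - t • w - a = -(t • w) by abel, inner_neg_right, real_inner_smul_right, norm_neg,
      norm_smul, mul_pow, Real.norm_eq_abs, sq_abs] at h₂
    have hw : ⟪p a, w⟫ - ⟪p b, w⟫ = ‖w‖ ^ 2 := by
      rw [← inner_sub_left, real_inner_self_eq_norm_sq]
    linear_combination h₁ + h₂ - t * hw
  refine le_mul_of_forall_quadratic_le hM fun t => ?_
  have h₁ := key u v t
  have h₂ := key v u t
  rw [norm_sub_rev, ← neg_sub u v, inner_neg_right] at h₂
  rw [inner_sub_left]
  linarith

theorem interpolation_of_quadratic_bounds (hαL : α ≤ L)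
    (hlow : ∀ u v, f v + ⟪p v, u - v⟫ + α / 2 * ‖u - v‖ ^ 2 ≤ f u)
    (hup : ∀ u v, f u ≤ f v + ⟪p v, u - v⟫ + L / 2 * ‖u - v‖ ^ 2) (u v : E) :
    α * L * ‖u - v‖ ^ 2 + ‖p u - p v‖ ^ 2 ≤ (α + L) * ⟪p u - p v, u - v⟫ := by
  have hsq : ∀ u v : E, ‖u‖ ^ 2 = ‖v‖ ^ 2 + 2 * ⟪v, u - v⟫ + ‖u - v‖ ^ 2 := fun u v => by
    rw [← norm_add_sq_real, add_sub_cancel]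
  -- `f - (α/2)‖·‖²` is convex and `(L - α)`-smooth relative to `p - α • id`
  have key := sq_norm_sub_le_mul_inner_sub (f := fun x => f x - α / 2 * ‖x‖ ^ 2)
    (p := fun x => p x - α • x) (sub_nonneg.2 hαL)
    (fun u v => by
      simp only [inner_sub_left, real_inner_smul_left]
      linear_combination hlow u v + α / 2 * hsq u v)
    (fun u v => by
      simp only [inner_sub_left, real_inner_smul_left]
      linear_combination hup u v - α / 2 * hsq u v) u v
  rw [show p u - α • u - (p v - α • v) = (p u - p v) - α • (u - v) by rw [smul_sub]; abel] at key
  set G := p u - p v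
  set d := u - v
  clear_value G d
  rw [norm_sub_sq_real, inner_sub_left, real_inner_smul_right, real_inner_smul_left, norm_smul,
    real_inner_self_eq_norm_sq, mul_pow, Real.norm_eq_abs, sq_abs] at key
  linear_combination key

end QuadraticBounds

section GradientStep

variable {f : E → ℝ} {p : E → E} {α L t : ℝ}

theorem norm_sub_smul_sub_le (hα : 0 < α)
    (hlow : ∀ u v, f v + ⟪p v, u - v⟫ + α / 2 * ‖u - v‖ ^ 2 ≤ f u)
    (hup : ∀ u v, f u ≤ f v + ⟪p v, u - v⟫ + L / 2 * ‖u - v‖ ^ 2)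
    {θstar : E} (hcrit : p θstar = 0) (ht₀ : 0 ≤ t) (ht : t ≤ 2 / (α + L)) (x : E) :
    ‖x - t • p x - θstar‖ ≤ (1 - t * α) * ‖x - θstar‖ := by
  rcases subsingleton_or_nontrivial E with _ | _
  · simp [Subsingleton.elim x θstar, hcrit]
  have hαL := le_of_quadratic_bounds hlow hup
  have hI := interpolation_of_quadratic_bounds hαL hlow hup x θstar
  have hM := mul_norm_sub_sq_le_inner_sub hlow x θstar
  rw [hcrit, sub_zero] at hI hM
  rw [show x - t • p x - θstar = (x - θstar) - t • p x by abel]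
  set G := p x
  set d := x - θstar
  clear_value G d
  have hαL' : 0 < α + L := by linarith
  have ht' : t * (α + L) ≤ 2 := (le_div_iff₀ hαL').1 ht
  have hG : α * ‖d‖ ≤ ‖G‖ := by
    rcases (norm_nonneg d).eq_or_lt with hd | hd
    · rw [← hd, mul_zero]; exact norm_nonneg G
    · refine le_of_mul_le_mul_right ?_ hd
      nlinarith [real_inner_le_norm G d]
  have hG2 := pow_le_pow_left₀ (by positivity) hG 2
  have hsq : ‖d - t • G‖ ^ 2 ≤ ((1 - t * α) * ‖d‖) ^ 2 := by
    refine le_of_mul_le_mul_left ?_ hαL'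
    rw [norm_sub_sq_real, real_inner_smul_right, norm_smul, mul_pow, Real.norm_eq_abs, sq_abs,
      real_inner_comm]
    nlinarith [mul_nonneg ht₀ (sub_nonneg.2 ht'), mul_nonneg ht₀ (sub_nonneg.2 hI)]
  refine (sq_le_sq₀ (norm_nonneg _) (mul_nonneg ?_ (norm_nonneg _))).1 hsq
  nlinarith

theorem apply_sub_smul_le (hup : ∀ u v, f u ≤ f v + ⟪p v, u - v⟫ + L / 2 * ‖u - v‖ ^ 2)
    (hL : 0 < L) (ht₀ : 0 ≤ t) (ht : t ≤ 2 / L) (x : E) : f (x - t • p x) ≤ f x := by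
  have h := hup (x - t • p x) x
  rw [sub_sub_cancel_left, inner_neg_right, real_inner_smul_right, real_inner_self_eq_norm_sq,
    norm_neg, norm_smul, mul_pow, Real.norm_eq_abs, sq_abs] at h
  have htL : t * L ≤ 2 := (le_div_iff₀ hL).1 ht
  nlinarith [mul_nonneg (mul_nonneg ht₀ (sub_nonneg.2 htL)) (sq_nonneg ‖p x‖)]

end GradientStep

section GradientDescent

variable {f : E → ℝ} {p : E → E} {α L : ℝ} {θ : ℕ → E} {t : ℕ → ℝ} {k₀ k : ℕ}

theorem apply_le_of_gradientDescent (hup : ∀ u v, f u ≤ f v + ⟪p v, u - v⟫ + L / 2 * ‖u - v‖ ^ 2)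
    (hL : 0 < L) (hθ : ∀ j, θ (j + 1) = θ j - t j • p (θ j)) (ht₀ : ∀ j, 0 ≤ t j)
    (ht : ∀ j, k₀ ≤ j → j < k → t j ≤ 2 / L) {j : ℕ} (hj₀ : k₀ ≤ j) (hjk : j ≤ k) :
    f (θ j) ≤ f (θ k₀) := by
  obtain ⟨m, rfl⟩ := Nat.exists_eq_add_of_le hj₀
  have := le_geom (u := fun i => f (θ (k₀ + i))) zero_le_one m fun i hi => by
    rw [one_mul, ← add_assoc, hθ]
    exact apply_sub_smul_le hup hL (ht₀ _) (ht _ (by omega) (by omega)) _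
  simpa using this

theorem norm_sub_le_exp_of_gradientDescent (hα : 0 < α)
    (hlow : ∀ u v, f v + ⟪p v, u - v⟫ + α / 2 * ‖u - v‖ ^ 2 ≤ f u)
    (hup : ∀ u v, f u ≤ f v + ⟪p v, u - v⟫ + L / 2 * ‖u - v‖ ^ 2)
    {θstar : E} (hcrit : p θstar = 0) (hθ : ∀ j, θ (j + 1) = θ j - t j • p (θ j))
    (ht₀ : ∀ j, 0 ≤ t j) {ℓ : ℝ} (hℓ : ∀ j, k₀ ≤ j → j < k → ℓ ≤ t j)
    (ht : ∀ j, k₀ ≤ j → j < k → t j ≤ 2 / (α + L)) (hk : k₀ ≤ k) :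
    ‖θ k - θstar‖ ≤ Real.exp (-(α * ℓ) * ((k : ℝ) - k₀)) * ‖θ k₀ - θstar‖ := by
  obtain ⟨m, rfl⟩ := Nat.exists_eq_add_of_le hk
  have := le_geom (u := fun i => ‖θ (k₀ + i) - θstar‖) (Real.exp_nonneg (-(α * ℓ))) m
    fun i hi => by
      have hj₀ : k₀ ≤ k₀ + i := by omega
      have hjk : k₀ + i < k₀ + m := by omega
      have hfactor : 1 - t (k₀ + i) * α ≤ Real.exp (-(α * ℓ)) := by
        have := Real.add_one_le_exp (-(t (k₀ + i) * α))
        have := Real.exp_le_exp.2 (show -(t (k₀ + i) * α) ≤ -(α * ℓ) by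
          nlinarith [hℓ _ hj₀ hjk])
        linarith
      rw [← add_assoc, hθ]
      exact (norm_sub_smul_sub_le hα hlow hup hcrit (ht₀ _) (ht _ hj₀ hjk) _).trans
        (mul_le_mul_of_nonneg_right hfactor (norm_nonneg _))
  rw [add_zero, ← Real.exp_nat_mul] at this
  push_cast
  rwa [add_sub_cancel_left, mul_comm (-(α * ℓ))]

end GradientDescent

section Calculus

variable [CompleteSpace E]

theorem IsLocalMin.gradient_eq_zero {f : E → ℝ} {a : E} (h : IsLocalMin f a) : ∇ f a = 0 := by
  rw [gradient, h.fderiv_eq_zero, map_zero]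

theorem gradient_sqrt_add_const {f : E → ℝ} {c : ℝ} {x : E} (hf : DifferentiableAt ℝ f x)
    (hx : 0 < f x + c) : ∇ (fun y => √(f y + c)) x = (2 * √(f x + c))⁻¹ • ∇ f x := by
  refine HasGradientAt.gradient ?_
  rw [hasGradientAt_iff_hasFDerivAt, map_smul, toDual_gradient, ← one_div]
  exact (hf.hasFDerivAt.add_const c).sqrt hx.ne'

theorem le_add_inner_gradient_add_sq_of_lipschitz {f : E → ℝ} {L : ℝ} (hf : Differentiable ℝ f)
    (hLip : ∀ u v, ‖∇ f u - ∇ f v‖ ≤ L * ‖u - v‖) (u v : E) :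
    f u ≤ f v + ⟪∇ f v, u - v⟫ + L / 2 * ‖u - v‖ ^ 2 := by
  obtain ⟨d, rfl⟩ : ∃ d, u = v + d := ⟨u - v, (add_sub_cancel v u).symm⟩
  rw [add_sub_cancel_left]
  have hderiv (s : ℝ) : HasDerivAt (fun s : ℝ => f (v + s • d)) ⟪∇ f (v + s • d), d⟫ s := by
    have hline : HasDerivAt (fun s : ℝ => v + s • d) d s := by
      simpa using ((hasDerivAt_id s).smul_const d).const_add v
    exact (hasGradientAt_iff_hasFDerivAt.1 (hf _).hasGradientAt).comp_hasDerivAt s hline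
  have hB (s : ℝ) : HasDerivAt (fun s : ℝ => f v + s * ⟪∇ f v, d⟫ + L / 2 * s ^ 2 * ‖d‖ ^ 2)
      (⟪∇ f v, d⟫ + L * s * ‖d‖ ^ 2) s :=
    ((((hasDerivAt_id s).mul_const ⟪∇ f v, d⟫).const_add (f v)).add
      (((hasDerivAt_pow 2 s).const_mul (L / 2)).mul_const (‖d‖ ^ 2))).congr_deriv
      (by push_cast; ring)
  have hbound : ∀ s ∈ Set.Ico (0 : ℝ) 1, ⟪∇ f (v + s • d), d⟫ ≤ ⟪∇ f v, d⟫ + L * s * ‖d‖ ^ 2 := by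
    rintro s ⟨hs, -⟩
    have := hLip (v + s • d) v
    rw [add_sub_cancel_left, norm_smul, Real.norm_eq_abs, abs_of_nonneg hs] at this
    have := real_inner_le_norm (∇ f (v + s • d) - ∇ f v) d
    rw [inner_sub_left] at this
    nlinarith [norm_nonneg d]
  have := image_le_of_deriv_right_le_deriv_boundary (a := 0) (b := 1)
    (fun s _ => (hderiv s).continuousAt.continuousWithinAt)
    (fun s _ => (hderiv s).hasDerivWithinAt)
    (by simp) (fun s _ => (hB s).continuousAt.continuousWithinAt)
    (fun s _ => (hB s).hasDerivWithinAt) hbound (x := 1) (by simp)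
  simpa using this

end Calculus

section EnergySequence

variable {r a : ℕ → ℝ}

theorem pos_of_eq_div_one_add (hr : ∀ k, r (k + 1) = r k / (1 + a k)) (ha : ∀ k, 0 ≤ a k)
    (h₀ : 0 < r 0) (k : ℕ) : 0 < r k := by
  induction k with
  | zero => exact h₀
  | succ k ih => rw [hr]; exact div_pos ih (by linarith [ha k])

theorem antitone_of_eq_div_one_add (hr : ∀ k, r (k + 1) = r k / (1 + a k)) (ha : ∀ k, 0 ≤ a k)
    (hr₀ : ∀ k, 0 ≤ r k) : Antitone r :=
  antitone_nat_of_succ_le fun k => by rw [hr]; exact div_le_self (hr₀ k) (by linarith [ha k])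

end EnergySequence

theorem aegd_strongly_convex_rate_general {n : ℕ} (f : EuclideanSpace ℝ (Fin n) → ℝ)
    (hf : ContDiff ℝ 2 f)
    (c : ℝ) (hfc : ∀ x, 0 < f x + c)
    (g : EuclideanSpace ℝ (Fin n) → ℝ) (hg : g = fun x => Real.sqrt (f x + c))
    (α : ℝ) (hα : 0 < α)
    (hsc : ∀ u v, f v + (inner ℝ (gradient f v) (u - v) : ℝ) + α / 2 * ‖u - v‖ ^ 2 ≤ f u)
    (L : ℝ) (hL : 0 < L)
    (hLip : ∀ u v, ‖gradient f u - gradient f v‖ ≤ L * ‖u - v‖)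
    (θstar : EuclideanSpace ℝ (Fin n)) (hmin : ∀ x, f θstar ≤ f x)
    (η : ℝ) (hη : 0 < η)
    (θ : ℕ → EuclideanSpace ℝ (Fin n)) (r : ℕ → ℝ)
    (hr0 : r 0 = g (θ 0))
    (hr : ∀ k, r (k + 1) = r k / (1 + 2 * η * ‖gradient g (θ k)‖ ^ 2))
    (hθ : ∀ k, θ (k + 1) = θ k - (2 * η * r (k + 1)) • gradient g (θ k))
    (ηk : ℕ → ℝ) (hηk : ∀ k, ηk k = η * r (k + 1) / g (θ k))
    (k₀ k : ℕ) (hk : k₀ ≤ k)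
    (hstep : ∀ j, k₀ ≤ j → j < k → ηk j ≤ 2 / (α + L)) :
    ‖θ k - θstar‖
      ≤ Real.exp (-(α * η / Real.sqrt (f (θ k₀) + c)) * ((k : ℝ) - (k₀ : ℝ)) * r k)
        * ‖θ k₀ - θstar‖ := by
  subst hg
  have hdiff : Differentiable ℝ f := hf.differentiable (by norm_num)
  have hup := le_add_inner_gradient_add_sq_of_lipschitz hdiff hLip
  have hcrit : ∇ f θstar = 0 := IsLocalMin.gradient_eq_zero (.of_forall hmin)
  have hr_pos : ∀ j, 0 < r j :=
    pos_of_eq_div_one_add hr (fun _ => by positivity) (hr0 ▸ Real.sqrt_pos.2 (hfc _))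
  have hr_anti : Antitone r :=
    antitone_of_eq_div_one_add hr (fun _ => by positivity) fun j => (hr_pos j).le
  have hηk_nonneg (j : ℕ) : 0 ≤ ηk j :=
    hηk j ▸ div_nonneg (mul_nonneg hη.le (hr_pos _).le) (Real.sqrt_nonneg _)
  have hθ' (j : ℕ) : θ (j + 1) = θ j - ηk j • ∇ f (θ j) := by
    rw [hθ, gradient_sqrt_add_const (hdiff _) (hfc _), smul_smul, hηk]
    congr 2
    field_simp
  have hf_le (j : ℕ) (h₀ : k₀ ≤ j) (h₁ : j ≤ k) : f (θ j) ≤ f (θ k₀) :=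
    apply_le_of_gradientDescent hup hL hθ' hηk_nonneg
      (fun i hi₀ hi₁ => (hstep i hi₀ hi₁).trans (by gcongr; linarith)) h₀ h₁
  have hηk_ge (j : ℕ) (h₀ : k₀ ≤ j) (h₁ : j < k) : η * r k / √(f (θ k₀) + c) ≤ ηk j := by
    rw [hηk]
    exact div_le_div₀ (mul_nonneg hη.le (hr_pos _).le)
      (mul_le_mul_of_nonneg_left (hr_anti h₁) hη.le) (Real.sqrt_pos.2 (hfc _))
      (Real.sqrt_le_sqrt (by linarith [hf_le j h₀ h₁.le]))
  calc ‖θ k - θstar‖ ≤ _ :=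
        norm_sub_le_exp_of_gradientDescent hα hsc hup hcrit hθ' hηk_nonneg hηk_ge hstep hk
    _ = _ := by ring_nf

/-- For the global AEGD iterates, if `f` is twice differentiable,
`α`-strongly convex and `L`-smooth with global minimizer `θ*`, and `η_j ≤ 2/(α+L)`
for all `k₀ ≤ j < k`, then `‖θ_k − θ*‖ ≤ exp(−c₂ (k − k₀) r_k) ‖θ_{k₀} − θ*‖` with
`c₂ := αη/√(f(θ_{k₀})+c)`. -/
theorem aegd_strongly_convex_rate {n : ℕ} (f : EuclideanSpace ℝ (Fin n) → ℝ)
    (hf : ContDiff ℝ 2 f) (hbdd : ∃ B : ℝ, ∀ x, B ≤ f x)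
    (c : ℝ) (hc : 0 < c) (hfc : ∀ x, 0 < f x + c)
    (g : EuclideanSpace ℝ (Fin n) → ℝ) (hg : g = fun x => Real.sqrt (f x + c))
    (α : ℝ) (hα : 0 < α)
    (hsc : ∀ u v, f v + (inner ℝ (gradient f v) (u - v) : ℝ) + α / 2 * ‖u - v‖ ^ 2 ≤ f u)
    (L : ℝ) (hL : 0 < L)
    (hLip : ∀ u v, ‖gradient f u - gradient f v‖ ≤ L * ‖u - v‖)
    (θstar : EuclideanSpace ℝ (Fin n)) (hmin : ∀ x, f θstar ≤ f x)
    (η : ℝ) (hη : 0 < η)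
    (θ : ℕ → EuclideanSpace ℝ (Fin n)) (r : ℕ → ℝ)
    (hr0 : r 0 = g (θ 0))
    (hr : ∀ k, r (k + 1) = r k / (1 + 2 * η * ‖gradient g (θ k)‖ ^ 2))
    (hθ : ∀ k, θ (k + 1) = θ k - (2 * η * r (k + 1)) • gradient g (θ k))
    (ηk : ℕ → ℝ) (hηk : ∀ k, ηk k = η * r (k + 1) / g (θ k))
    (k₀ k : ℕ) (hk : k₀ ≤ k)
    (hstep : ∀ j, k₀ ≤ j → j < k → ηk j ≤ 2 / (α + L)) :
    ‖θ k - θstar‖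
      ≤ Real.exp (-(α * η / Real.sqrt (f (θ k₀) + c)) * ((k : ℝ) - (k₀ : ℝ)) * r k)
        * ‖θ k₀ - θstar‖ :=
  aegd_strongly_convex_rate_general f hf c hfc g hg α hα hsc L hL hLip θstar hmin η hη θ r hr0 hr hθ
    ηk hηk k₀ k hk hstep
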